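/- Randomized schedulers are strictly more expressive than deterministic ones for PHL: there exist an MDP M and a PHL formula Φ = ∃σ. ∃π_1:σ. ∃π_2:σ. X(a_{π_1} ∧ ¬a_{π_2}) such that M satisfies Φ when scheduler quantifiers range over all (possibly randomized) schedulers, but M does not satisfy Φ when scheduler quantifiers range over deterministic schedulers only. Concretely, for the three-state MDP with initial state s_0, two actions α_1, α_2 leading deterministically from s_0 to s_1 (labelled {a}) and s_2 (labelled ∅) respectively, each absorbing: (1) the uniform randomized scheduler induces a Markov chain containing both a path whose second state is labelled {a} and a path whose second state is labelled ∅; (2) every deterministic scheduler induces a Markov chain with exactly one infinite path. -/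

import Mathlib

/-!
The uniform scheduler enables both actions at `s₀`, so its chain has a path through `s₁`
and one through `s₂`. A deterministic scheduler picks one enabled action after each
history, and every enabled action of this MDP leads to a single successor, so a path of
the induced chain is forced by recursion on its history: there is exactly one.
-/

namespace PHLStmt15

/-- The transition probability function of the three-state MDP: from `s₀ = 0`,
action `α₁ = 0` leads to `s₁ = 1` and action `α₂ = 1` leads to `s₂ = 2`, each with
probability 1; `s₁` and `s₂` are absorbing (under `α₁` resp. `α₂`). -/
def P : Fin 3 → Fin 2 → Fin 3 → ℝ := fun s a t =>
  if (s, a, t) ∈ ({((0 : Fin 3), (0 : Fin 2), (1 : Fin 3)),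
                   ((0 : Fin 3), (1 : Fin 2), (2 : Fin 3)),
                   ((1 : Fin 3), (0 : Fin 2), (1 : Fin 3)),
                   ((2 : Fin 3), (1 : Fin 2), (2 : Fin 3))} : Finset (Fin 3 × Fin 2 × Fin 3))
  then 1 else 0

/-- The labelling: proposition `a` holds exactly in state `s₁ = 1`. -/
def LabelA (s : Fin 3) : Prop := s = 1

/-- The history of states of a path up to time `i` (proper prefix, current state). -/
def histOf (π : ℕ → Fin 3) (i : ℕ) : List (Fin 3) × Fin 3 :=
  (List.ofFn (fun j : Fin i => π j), π i)

/-- A scheduler maps finite state-histories to distributions over the two actions. -/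
def IsSched (σ : (List (Fin 3) × Fin 3) → Fin 2 → ℝ) : Prop :=
  ∀ h : List (Fin 3) × Fin 3,
    (∀ a : Fin 2, 0 ≤ σ h a) ∧ (∑ a : Fin 2, σ h a = 1)
    ∧ (∀ a : Fin 2, 0 < σ h a → 0 < ∑ t : Fin 3, P h.2 a t)

/-- A scheduler is deterministic if every history is mapped to a point mass. -/
def IsDet (σ : (List (Fin 3) × Fin 3) → Fin 2 → ℝ) : Prop :=
  ∀ h : List (Fin 3) × Fin 3, ∃ a : Fin 2, σ h a = 1 ∧ ∀ b : Fin 2, b ≠ a → σ h b = 0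

/-- An infinite path of the Markov chain `M_σ` induced by scheduler `σ`: it starts in
the initial state `s₀ = 0` and every step has positive induced transition
probability `P_σ(h, h·s') = ∑ a, σ(h)(a) · P(last h, a, s')`. -/
def IsInducedPath (σ : (List (Fin 3) × Fin 3) → Fin 2 → ℝ) (π : ℕ → Fin 3) : Prop :=
  π 0 = 0 ∧ ∀ i : ℕ, 0 < ∑ a : Fin 2, σ (histOf π i) a * P (π i) a (π (i + 1))

/-- The uniform randomized scheduler: each action with probability 1/2. -/
noncomputable def uniform : (List (Fin 3) × Fin 3) → Fin 2 → ℝ := fun _ _ => 1 / 2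

def target (s : Fin 3) (a : Fin 2) : Fin 3 :=
  if s = 0 then (if a = 0 then 1 else 2) else s

lemma P_pos_iff_eq_target {s : Fin 3} {a : Fin 2} (hen : 0 < ∑ t : Fin 3, P s a t) (t : Fin 3) :
    0 < P s a t ↔ t = target s a := by
  fin_cases s <;> fin_cases a <;> fin_cases t <;>
    simp_all [P, target, Prod.ext_iff]

lemma histOf_congr {π π' : ℕ → Fin 3} {n : ℕ} (h : ∀ j ≤ n, π j = π' j) :
    histOf π n = histOf π' n := by
  simp only [histOf, h n le_rfl]
  congr 2
  exact funext fun j => h j j.2.le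

section HistoryRecursion

variable (f : List (Fin 3) × Fin 3 → Fin 3)

def histSeq (x : Fin 3) : ℕ → List (Fin 3) × Fin 3
  | 0 => ([], x)
  | n + 1 => ((histSeq x n).1 ++ [(histSeq x n).2], f (histSeq x n))

lemma histOf_histSeq (x : Fin 3) (n : ℕ) :
    histOf (fun i => (histSeq f x i).2) n = histSeq f x n := by
  induction n with
  | zero => rfl
  | succ n ih =>
    refine Prod.ext ?_ rfl
    simp only [histSeq, ← congrArg Prod.fst ih, histOf, List.ofFn_succ_last]
    rfl

theorem existsUnique_path_of_history_step (x : Fin 3) :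
    ∃! π : ℕ → Fin 3, π 0 = x ∧ ∀ i, π (i + 1) = f (histOf π i) := by
  refine ⟨fun i => (histSeq f x i).2, ⟨rfl, fun i => ?_⟩, fun π ⟨h0, hstep⟩ => funext fun n => ?_⟩
  · rw [histOf_histSeq]; rfl
  · induction n using Nat.strong_induction_on with
    | _ n ih =>
      cases n with
      | zero => exact h0
      | succ n =>
        rw [hstep, histOf_congr fun j hj => ih j (Nat.lt_succ_of_le hj), histOf_histSeq]
        rfl

end HistoryRecursion

noncomputable def IsDet.act {σ : (List (Fin 3) × Fin 3) → Fin 2 → ℝ} (hσ : IsDet σ)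
    (h : List (Fin 3) × Fin 3) : Fin 2 :=
  (hσ h).choose

lemma IsDet.apply_act {σ : (List (Fin 3) × Fin 3) → Fin 2 → ℝ} (hσ : IsDet σ)
    (h : List (Fin 3) × Fin 3) : σ h (hσ.act h) = 1 :=
  (hσ h).choose_spec.1

lemma IsDet.sum_mul_eq {σ : (List (Fin 3) × Fin 3) → Fin 2 → ℝ} (hσ : IsDet σ)
    (h : List (Fin 3) × Fin 3) (g : Fin 2 → ℝ) : ∑ b, σ h b * g b = g (hσ.act h) := by
  rw [Finset.sum_eq_single (hσ.act h) (fun b _ hb => by rw [(hσ h).choose_spec.2 b hb, zero_mul])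
    (fun hb => absurd (Finset.mem_univ _) hb), hσ.apply_act, one_mul]

lemma isInducedPath_iff_of_isDet {σ : (List (Fin 3) × Fin 3) → Fin 2 → ℝ} (hσ : IsSched σ)
    (hdet : IsDet σ) (π : ℕ → Fin 3) :
    IsInducedPath σ π ↔
      π 0 = 0 ∧ ∀ i, π (i + 1) = target (histOf π i).2 (hdet.act (histOf π i)) := by
  refine and_congr_right fun _ => forall_congr' fun i => ?_
  have hen := (hσ (histOf π i)).2.2 (hdet.act (histOf π i))
    (by rw [hdet.apply_act]; exact one_pos)
  rw [hdet.sum_mul_eq]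
  exact P_pos_iff_eq_target hen _

theorem existsUnique_isInducedPath_of_isDet {σ : (List (Fin 3) × Fin 3) → Fin 2 → ℝ}
    (hσ : IsSched σ) (hdet : IsDet σ) : ∃! π : ℕ → Fin 3, IsInducedPath σ π := by
  simp only [isInducedPath_iff_of_isDet hσ hdet]
  exact existsUnique_path_of_history_step (fun h => target h.2 (hdet.act h)) 0

def jumpPath (s : Fin 3) (n : ℕ) : Fin 3 := if n = 0 then 0 else s

lemma isInducedPath_uniform_jumpPath {s : Fin 3} (hs : s ≠ 0) :
    IsInducedPath uniform (jumpPath s) := by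
  refine ⟨rfl, fun i => ?_⟩
  fin_cases s
  · exact absurd rfl hs
  all_goals rcases i with _ | i <;> simp [jumpPath, uniform, P]

/-- Randomized schedulers are strictly more expressive than
deterministic ones for PHL on the three-state MDP above:
(1) the uniform randomized scheduler induces a Markov chain containing both a path
whose state at index 1 is labelled `{a}` (is `s₁`) and a path whose state at index 1
is not, witnessing `∃σ.∃π₁:σ.∃π₂:σ. X(a_{π₁} ∧ ¬a_{π₂})`; and
(2) every deterministic scheduler induces a Markov chain with exactly one infinite
path, so no deterministic scheduler satisfies the formula. -/
theorem randomized_strictly_more_expressive_than_deterministic :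
    (∃ π₁ π₂ : ℕ → Fin 3,
      IsInducedPath uniform π₁ ∧ IsInducedPath uniform π₂
      ∧ LabelA (π₁ 1) ∧ ¬ LabelA (π₂ 1))
    ∧ (∀ σ : (List (Fin 3) × Fin 3) → Fin 2 → ℝ,
        IsSched σ → IsDet σ → ∃! π : ℕ → Fin 3, IsInducedPath σ π) :=
  ⟨⟨jumpPath 1, jumpPath 2, isInducedPath_uniform_jumpPath (by decide),
      isInducedPath_uniform_jumpPath (by decide), rfl, by simp [LabelA, jumpPath]⟩,
    fun _ hσ hdet => existsUnique_isInducedPath_of_isDet hσ hdet⟩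

end PHLStmt15
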